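/- If the value function V : ℕ × ℕ → ℝ satisfies the Bellman recursion V(t,b) = max over a ∈ {0,…,b} of [Σ_{δ=0}^{a} m(δ)·(r_avg + V(t-1, b-δ)) + Σ_{δ=a+1}^{D} m(δ)·V(t-1,b)] with V(0,b) = 0 for all b, where m is a probability mass function on {0,…,D} and r_avg ≥ 0, then for every fixed t, V(t,·) is monotonically non-decreasing in b. -/

import Mathlib

/-! Induction on `t`: the Bellman update preserves monotonicity in the budget, because with
`m ≥ 0` the value of each fixed bid is monotone in `b`, and a larger budget only adds bids to
the maximum. -/

open Finset

/-- The expected one-step value of bidding `a` with budget `b` when the continuation value is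
`W`: a market price `δ ≤ a` is won, paying `δ`; a higher price is lost. -/
def bidValue (D : ℕ) (m : ℕ → ℝ) (ravg : ℝ) (W : ℕ → ℝ) (b a : ℕ) : ℝ :=
  (∑ δ ∈ range (a + 1), m δ * (ravg + W (b - δ))) + ∑ δ ∈ Icc (a + 1) D, m δ * W b

lemma monotone_bidValue {D : ℕ} {m : ℕ → ℝ} (hm : ∀ δ, 0 ≤ m δ) (ravg : ℝ) {W : ℕ → ℝ}
    (hW : Monotone W) (a : ℕ) : Monotone fun b => bidValue D m ravg W b a := by
  intro b b' hbb'
  dsimp only [bidValue]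
  gcongr with δ _ δ _
  · exact hm δ
  · exact hW (Nat.sub_le_sub_right hbb' δ)
  · exact hm δ
  · exact hW hbb'

lemma monotone_sup'_range {α : Type*} [LinearOrder α] {f : ℕ → ℕ → α}
    (hf : ∀ a, Monotone fun b => f b a) :
    Monotone fun b => (range (b + 1)).sup' nonempty_range_add_one (f b) := by
  intro b b' hbb'
  refine sup'_le _ _ fun a ha => ?_
  have ha' : a ∈ range (b' + 1) := mem_range.mpr (by have := mem_range.mp ha; omega)
  exact (hf a hbb').trans (le_sup' (f b') ha')

theorem value_monotone_in_budget_general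
    (D : ℕ) (m : ℕ → ℝ) (hm : ∀ δ, 0 ≤ m δ)
    (ravg : ℝ)
    (V : ℕ → ℕ → ℝ)
    (hV0 : ∀ b, V 0 b = 0)
    (hVrec : ∀ t b, V (t + 1) b =
      (range (b + 1)).sup' nonempty_range_add_one (fun a =>
        (∑ δ ∈ range (a + 1), m δ * (ravg + V t (b - δ))) +
        (∑ δ ∈ Icc (a + 1) D, m δ * V t b))) :
    ∀ t, Monotone (fun b => V t b) := by
  intro t
  induction t with
  | zero => simpa only [hV0] using monotone_const
  | succ t ih =>
    simp only [hVrec]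
    exact monotone_sup'_range (monotone_bidValue hm ravg ih)

/-- If `V` satisfies the Bellman recursion of the budget-constrained bidding MDP
with market price pmf `m` on `{0,…,D}` and nonnegative average reward `r_avg`,
then `V t ·` is monotonically non-decreasing in the budget. -/
theorem value_monotone_in_budget
    (D : ℕ) (m : ℕ → ℝ) (hm : ∀ δ, 0 ≤ m δ) (hm1 : ∑ δ ∈ range (D + 1), m δ = 1)
    (ravg : ℝ) (hr : 0 ≤ ravg)
    (V : ℕ → ℕ → ℝ)
    (hV0 : ∀ b, V 0 b = 0)
    (hVrec : ∀ t b, V (t + 1) b =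
      (range (b + 1)).sup' nonempty_range_add_one (fun a =>
        (∑ δ ∈ range (a + 1), m δ * (ravg + V t (b - δ))) +
        (∑ δ ∈ Icc (a + 1) D, m δ * V t b))) :
    ∀ t, Monotone (fun b => V t b) :=
  value_monotone_in_budget_general D m hm ravg V hV0 hVrec
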